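/- arXiv:1209.2788 — 2 statements merged into one kernel-verified Lean document; each statement's English description precedes it below -/
import Mathlib

section
/- For the string algebra A = kQ/I where Q is the linear quiver 1 →^α 2 →^β 3 →^τ 4 and I = ⟨αβτ⟩, the strings w = αβ and v = βτ admit extensions from w to v (since wτ = αβτ is excluded but v is obtained by overlap), yet Ext^1_A(M(w), M(v)) = 0 because M(w) = M(αβ) is a projective A-module. Hence Theorem 1 fails for string algebras that are not gentle. -/
open Classical

noncomputable section

/-- A quiver with a set of monomial relations (paths that are declared to lie in the
admissible monomial ideal `I`).  `kQ/I` is the corresponding algebra. -/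
structure GQ : Type 1 where
  V : Type
  A : Type
  s : A → V
  t : A → V
  rel : List A → Prop
  rel_path : ∀ p, rel p → List.Chain' (fun a b => t a = s b) p ∧ 2 ≤ p.length

/-- Letters of strings: arrows and formal inverses of arrows. -/
inductive Letter (G : GQ) : Type
  | ar : G.A → Letter G
  | inv : G.A → Letter G

namespace Letter

variable {G : GQ}

def src : Letter G → G.V
  | .ar a => G.s a
  | .inv a => G.t a

def tgt : Letter G → G.V
  | .ar a => G.t a
  | .inv a => G.s a

def flip : Letter G → Letter G
  | .ar a => .inv a
  | .inv a => .ar a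

end Letter

/-- The formal inverse of a word. -/
def strInv {G : GQ} (w : List (Letter G)) : List (Letter G) :=
  (w.map Letter.flip).reverse

namespace GQ

variable (G : GQ)

/-- Two consecutive letters fit together and are not mutually inverse. -/
def Ok (l l' : Letter G) : Prop := l.tgt = l'.src ∧ l' ≠ l.flip

/-- `w` is a string word: consecutive letters are composable, not mutually inverse, and no
direct subword nor the inverse of a direct subword lies in the ideal `I`. -/
def IsStringWord (w : List (Letter G)) : Prop :=
  List.Chain' G.Ok w ∧
  ∀ p : List G.A, G.rel p →
    ¬ (p.map Letter.ar <:+: w) ∧ ¬ (strInv (p.map Letter.ar) <:+: w)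

/-- The end vertex of a word with specified starting vertex `s₀`. -/
def endVtx (s₀ : G.V) (w : List (Letter G)) : G.V :=
  match w.getLast? with
  | some l => l.tgt
  | none => s₀

/-- Starting vertex of a word, with default for the empty word. -/
def wordSrc (dflt : G.V) (w : List (Letter G)) : G.V :=
  match w.head? with
  | some l => l.src
  | none => dflt

/-- A string over `A = kQ/I`, given as a word together with its starting vertex
(the latter being the only data for strings of length `0`). -/
def GoodStr (s₀ : G.V) (w : List (Letter G)) : Prop :=
  G.IsStringWord w ∧ ∀ l ∈ w.head?, Letter.src l = s₀

/-- The vertex at position `n` (`0 ≤ n ≤ length w`) on the walk `w`. -/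
def vtxN (s₀ : G.V) (w : List (Letter G)) (n : ℕ) : G.V :=
  match (w.drop n).head? with
  | some l => l.src
  | none => G.endVtx s₀ w

/-- Conditions (G1) and (G2): `kQ/I` is a string algebra. -/
def IsStringAlg : Prop :=
  (∀ v : G.V, ∀ a b c : G.A, G.s a = v → G.s b = v → G.s c = v → a = b ∨ a = c ∨ b = c) ∧
  (∀ v : G.V, ∀ a b c : G.A, G.t a = v → G.t b = v → G.t c = v → a = b ∨ a = c ∨ b = c) ∧
  (∀ a b c : G.A, G.t a = G.s b → G.t a = G.s c → ¬ G.rel [a, b] → ¬ G.rel [a, c] → b = c) ∧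
  (∀ a b c : G.A, G.t b = G.s a → G.t c = G.s a → ¬ G.rel [b, a] → ¬ G.rel [c, a] → b = c)

/-- `kQ/I` is a finite-dimensional gentle algebra: (G1)-(G4) plus finiteness
of the set of paths avoiding the relations. -/
def IsGentle : Prop :=
  G.IsStringAlg ∧
  (∀ p, G.rel p → p.length = 2) ∧
  (∀ a b c : G.A, G.rel [a, b] → G.rel [a, c] → b = c) ∧
  (∀ a b c : G.A, G.rel [b, a] → G.rel [c, a] → b = c) ∧
  {p : List G.A | List.Chain' (fun a b => G.t a = G.s b) p ∧ ∀ q, G.rel q → ¬ q <:+: p}.Finite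

/-- `(D,E,F)` is a factor string of `v`. -/
def FactorTriple (v D E F : List (Letter G)) : Prop :=
  v = D ++ E ++ F ∧
  (D = [] ∨ ∃ a, D.getLast? = some (Letter.inv a)) ∧
  (F = [] ∨ ∃ a, F.head? = some (Letter.ar a))

/-- `(D,E,F)` is a substring of `w`. -/
def SubTriple (w D E F : List (Letter G)) : Prop :=
  w = D ++ E ++ F ∧
  (D = [] ∨ ∃ a, D.getLast? = some (Letter.ar a)) ∧
  (F = [] ∨ ∃ a, F.head? = some (Letter.inv a))

/-- An admissible pair `(D,E,F) × (D',E',F') ∈ F(v) × S(w)`. -/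
def AdPair (s₀v : G.V) (v : List (Letter G)) (s₀w : G.V) (w : List (Letter G))
    (D E F D' E' F' : List (Letter G)) : Prop :=
  G.FactorTriple v D E F ∧ G.SubTriple w D' E' F' ∧
  (E' = E ∨ E' = strInv E) ∧
  (E = [] → G.vtxN s₀v v D.length = G.vtxN s₀w w D'.length)

/-- A one-sided admissible pair. -/
def OneSided (D E F D' E' F' : List (Letter G)) : Prop :=
  (E' = E ∧ ((D = [] ∧ D' = []) ∨ (F = [] ∧ F' = []))) ∨
  (E' = strInv E ∧ ((D = [] ∧ F' = []) ∨ (F = [] ∧ D' = [])))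

/-- The strings `w`, `v` have extensions from `w` to `v`: (E1), (E2) or (E3). -/
def HasExt (s₀w : G.V) (w : List (Letter G)) (s₀v : G.V) (v : List (Letter G)) : Prop :=
  (∃ a : G.A, G.s a = G.endVtx s₀w w ∧
    ((G.t a = s₀v ∧ G.IsStringWord (w ++ Letter.ar a :: v)) ∨
     (G.t a = G.endVtx s₀v v ∧ G.IsStringWord (w ++ Letter.ar a :: strInv v)))) ∨
  (∃ b : G.A, G.s b = s₀w ∧
    ((G.t b = s₀v ∧ G.IsStringWord (strInv w ++ Letter.ar b :: v)) ∨
     (G.t b = G.endVtx s₀v v ∧ G.IsStringWord (strInv w ++ Letter.ar b :: strInv v)))) ∨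
  (∃ D E F D' E' F', G.AdPair s₀v v s₀w w D E F D' E' F' ∧ ¬ G.OneSided D E F D' E' F')

/-- `w` does not start on a peak iff some arrow can be added in front. -/
def StartsOnPeak (s₀ : G.V) (w : List (Letter G)) : Prop :=
  ¬ ∃ a : G.A, G.t a = s₀ ∧ G.IsStringWord (Letter.ar a :: w)

def EndsOnPeak (s₀ : G.V) (w : List (Letter G)) : Prop :=
  ¬ ∃ b : G.A, G.t b = G.endVtx s₀ w ∧ G.IsStringWord (w ++ [Letter.inv b])

def StartsInDeep (s₀ : G.V) (w : List (Letter G)) : Prop :=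
  ¬ ∃ b : G.A, G.s b = s₀ ∧ G.IsStringWord (Letter.inv b :: w)

def EndsInDeep (s₀ : G.V) (w : List (Letter G)) : Prop :=
  ¬ ∃ a : G.A, G.s a = G.endVtx s₀ w ∧ G.IsStringWord (w ++ [Letter.ar a])

def IsDirectWord (w : List (Letter G)) : Prop := ∀ l ∈ w, ∃ a, l = Letter.ar a

def IsInverseWord (w : List (Letter G)) : Prop := ∀ l ∈ w, ∃ a, l = Letter.inv a

/-- `N_a = V_a · a · U_a` is the unique string with `U_a`, `V_a` inverse strings which starts
in a deep and ends on a peak. -/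
def NCond (a : G.A) (Va Ua : List (Letter G)) : Prop :=
  G.IsInverseWord Va ∧ G.IsInverseWord Ua ∧
  G.IsStringWord (Va ++ Letter.ar a :: Ua) ∧
  G.StartsInDeep (G.wordSrc (G.s a) Va) (Va ++ Letter.ar a :: Ua) ∧
  G.EndsOnPeak (G.wordSrc (G.s a) Va) (Va ++ Letter.ar a :: Ua)

/-- A band. -/
def IsBand (s₀ : G.V) (w : List (Letter G)) : Prop :=
  G.GoodStr s₀ w ∧ w ≠ [] ∧ G.endVtx s₀ w = s₀ ∧
  (∀ n : ℕ, G.IsStringWord (List.flatten (List.replicate n w))) ∧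
  ¬ ∃ u : List (Letter G), ∃ m : ℕ, 2 ≤ m ∧ w = List.flatten (List.replicate m u)

end GQ

/-- A representation of the quiver `Q` over `k`; modules over `kQ/I` are the representations
satisfying the relations (`SatRel` below). -/
structure Repn (G : GQ) (k : Type) [Field k] : Type 1 where
  V : G.V → Type
  acg : ∀ i, AddCommGroup (V i)
  mod : ∀ i, Module k (V i)
  f : ∀ a : G.A, V (G.s a) →ₗ[k] V (G.t a)

attribute [instance] Repn.acg Repn.mod

variable {k : Type} [Field k] {G : GQ}

/-- Apply the maps of a representation along a path of arrows. -/
def Repn.appPath (R : Repn G k) : List G.A → (Σ i, R.V i) → (Σ i, R.V i)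
  | [], x => x
  | a :: p, ⟨i, x⟩ =>
      Repn.appPath R p ⟨G.t a, if h : i = G.s a then R.f a (cast (congrArg R.V h) x) else 0⟩

/-- The representation satisfies the relations, i.e. is a module over `kQ/I`. -/
def SatRel (R : Repn G k) : Prop :=
  ∀ p, G.rel p → ∀ x : Σ i, R.V i, (R.appPath p x).2 = 0

/-- Morphisms of representations. -/
structure RepHom (M N : Repn G k) : Type where
  app : ∀ i, M.V i →ₗ[k] N.V i
  comm : ∀ (a : G.A) (x : M.V (G.s a)), app (G.t a) (M.f a x) = N.f a (app (G.s a) x)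

def RepHom.comp {M N P : Repn G k} (g : RepHom N P) (f : RepHom M N) : RepHom M P where
  app i := (g.app i).comp (f.app i)
  comm a x := by
    simp only [LinearMap.comp_apply]
    rw [f.comm, g.comm]

/-- `0 → M → E → N → 0` is a short exact sequence of representations. -/
def IsSES {M E N : Repn G k} (ι : RepHom M E) (π : RepHom E N) : Prop :=
  (∀ i, Function.Injective (ι.app i)) ∧ (∀ i, Function.Surjective (π.app i)) ∧
  (∀ i, LinearMap.range (ι.app i) = LinearMap.ker (π.app i))

def Splits {E N : Repn G k} (π : RepHom E N) : Prop :=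
  ∃ σ : RepHom N E, ∀ i x, (π.app i) ((σ.app i) x) = x

/-- `Ext¹_A(M, N) ≠ 0`: there is a non-split extension `0 → N → E → M → 0` of
`A = kQ/I`-modules. -/
def Ext1Nonzero (M N : Repn G k) : Prop :=
  ∃ (E : Repn G k) (ι : RepHom N E) (π : RepHom E M),
    SatRel E ∧ IsSES ι π ∧ ¬ Splits π

def IsIso {M N : Repn G k} (φ : RepHom M N) : Prop := ∀ i, Function.Bijective (φ.app i)

def RepIso (M N : Repn G k) : Prop := ∃ φ : RepHom M N, IsIso φ

def IsZeroHom {M N : Repn G k} (φ : RepHom M N) : Prop := ∀ i x, φ.app i x = 0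

/-- Projective module over `kQ/I`. -/
def IsProjectiveRep (P : Repn G k) : Prop :=
  SatRel P ∧ ∀ (X Y : Repn G k), SatRel X → SatRel Y →
    ∀ (e : RepHom X Y), (∀ i, Function.Surjective (e.app i)) →
    ∀ (g : RepHom P Y), ∃ h : RepHom P X, ∀ i x, (e.app i) ((h.app i) x) = g.app i x

/-- Injective module over `kQ/I`. -/
def IsInjectiveRep (I : Repn G k) : Prop :=
  SatRel I ∧ ∀ (X Y : Repn G k), SatRel X → SatRel Y →
    ∀ (m : RepHom X Y), (∀ i, Function.Injective (m.app i)) →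
    ∀ (g : RepHom X I), ∃ h : RepHom Y I, ∀ i x, (h.app i) ((m.app i) x) = g.app i x

def FactorsThroughProj {M N : Repn G k} (φ : RepHom M N) : Prop :=
  ∃ (P : Repn G k) (g : RepHom M P) (h : RepHom P N), IsProjectiveRep P ∧
    ∀ i x, (h.app i) ((g.app i) x) = φ.app i x

/-- Indecomposability: nonzero, and every idempotent endomorphism is `0` or `1`. -/
def Indec (M : Repn G k) : Prop :=
  (∃ i, ∃ x : M.V i, x ≠ 0) ∧
  ∀ e : RepHom M M, (∀ i x, e.app i (e.app i x) = e.app i x) →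
    (∀ i x, e.app i x = x) ∨ (∀ i x, e.app i x = 0)

/-- Direct sum of two representations. -/
def dsum (M N : Repn G k) : Repn G k where
  V i := M.V i × N.V i
  acg _ := inferInstance
  mod _ := inferInstance
  f a := (M.f a).prodMap (N.f a)

/-- An Auslander-Reiten (almost split) sequence `0 → M → E → N → 0`. -/
def IsARSeq {M E N : Repn G k} (ι : RepHom M E) (π : RepHom E N) : Prop :=
  IsSES ι π ∧ ¬ Splits π ∧
  (∀ (Z : Repn G k), SatRel Z → ∀ g : RepHom Z N,
      (¬ ∃ σ : RepHom N Z, ∀ i x, (g.app i) ((σ.app i) x) = x) →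
      ∃ h : RepHom Z E, ∀ i x, (π.app i) ((h.app i) x) = g.app i x) ∧
  (∀ (Z : Repn G k), SatRel Z → ∀ g : RepHom M Z,
      (¬ ∃ σ : RepHom Z M, ∀ i x, (σ.app i) ((g.app i) x) = x) →
      ∃ h : RepHom E Z, ∀ i x, (h.app i) ((ι.app i) x) = g.app i x)

namespace GQ

/-- Position `p` is sent to position `q` by the arrow `a` in the string module of `w`. -/
def Link (G : GQ) (w : List (Letter G)) (a : G.A) (p q : ℕ) : Prop :=
  (∃ m : Fin w.length, w.get m = Letter.ar a ∧ p = (m : ℕ) ∧ q = (m : ℕ) + 1) ∨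
  (∃ m : Fin w.length, w.get m = Letter.inv a ∧ q = (m : ℕ) ∧ p = (m : ℕ) + 1)

end GQ

/-- The string module `M(w)` as a representation of `Q`. -/
def stringRep (k : Type) [Field k] (G : GQ) (s₀ : G.V) (w : List (Letter G)) : Repn G k where
  V i := {j : Fin (w.length + 1) // G.vtxN s₀ w (j : ℕ) = i} → k
  acg _ := inferInstance
  mod _ := inferInstance
  f a :=
    { toFun := fun x q =>
        if h : ∃ p : {j : Fin (w.length + 1) // G.vtxN s₀ w (j : ℕ) = G.s a},
            G.Link w a (p.1 : ℕ) (q.1 : ℕ)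
        then x h.choose else 0
      map_add' := by
        intro x y
        funext q
        by_cases h : ∃ p : {j : Fin (w.length + 1) // G.vtxN s₀ w (j : ℕ) = G.s a},
            G.Link w a (p.1 : ℕ) (q.1 : ℕ)
        · simp only [dif_pos h, Pi.add_apply]
        · simp only [dif_neg h, Pi.add_apply, add_zero]
      map_smul' := by
        intro c x
        funext q
        by_cases h : ∃ p : {j : Fin (w.length + 1) // G.vtxN s₀ w (j : ℕ) = G.s a},
            G.Link w a (p.1 : ℕ) (q.1 : ℕ)
        · simp only [dif_pos h, Pi.smul_apply, RingHom.id_apply, smul_eq_mul]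
        · simp only [dif_neg h, Pi.smul_apply, RingHom.id_apply, smul_zero] }

/-- The dimension vector of the string module of `w`. -/
def dimVec (G : GQ) (s₀ : G.V) (w : List (Letter G)) (i : G.V) : ℕ :=
  Nat.card {j : Fin (w.length + 1) // G.vtxN s₀ w (j : ℕ) = i}

/-- The dimension vector of a representation. -/
def repDim (M : Repn G k) (i : G.V) : ℕ := Module.finrank k (M.V i)

/-- `φ` is the canonical homomorphism `f_p : M(v) → M(w)` attached to an admissible pair
whose `E`-part sits at positions `lD, …, lD + lE` of `v` and `lD', …, lD' + lE` of `w`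
(`rev` records whether the identification reverses orientation). -/
def CanonicalApp (k : Type) [Field k] (G : GQ) (s₀v : G.V) (v : List (Letter G))
    (s₀w : G.V) (w : List (Letter G)) (lD lD' lE : ℕ) (rev : Bool)
    (φ : RepHom (stringRep k G s₀v v) (stringRep k G s₀w w)) : Prop :=
  ∀ (i : G.V) (x : (stringRep k G s₀v v).V i)
    (q : {j : Fin (w.length + 1) // G.vtxN s₀w w (j : ℕ) = i}),
    φ.app i x q =
      if h : ∃ p : {j : Fin (v.length + 1) // G.vtxN s₀v v (j : ℕ) = i},
          lD' ≤ (q.1 : ℕ) ∧ (q.1 : ℕ) ≤ lD' + lE ∧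
          (p.1 : ℕ) = (if rev then lD + (lE - ((q.1 : ℕ) - lD')) else lD + ((q.1 : ℕ) - lD'))
      then x h.choose else 0

/-- Combinatorial interface for a triangulated unpunctured marked surface `(S,M)` with a
triangulation `Γ` and the associated gentle (Jacobian) algebra `G_Γ`. -/
structure SurfData : Type 1 where
  /-- homotopy classes of non-contractible curves between marked points -/
  Curve : Type
  /-- minimal intersection numbers -/
  Int : Curve → Curve → ℕ
  Int_symm : ∀ γ δ, Int γ δ = Int δ γ
  /-- arcs = curves without self-intersections -/
  IsArc : Curve → Prop
  arc_self : ∀ γ, IsArc γ → Int γ γ = 0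
  /-- the triangulation -/
  Γ : Finset Curve
  Γ_arc : ∀ τ ∈ Γ, IsArc τ
  Γ_compat : ∀ τ ∈ Γ, ∀ τ' ∈ Γ, Int τ τ' = 0
  /-- Mosher's theorem: an arc is determined by its intersection numbers with `Γ` -/
  arc_unique : ∀ γ δ, IsArc γ → IsArc δ → (∀ τ ∈ Γ, Int γ τ = Int δ τ) → γ = δ
  /-- the triangles of `Γ` -/
  Tri : Type
  /-- the three sides of each triangle -/
  side : Tri → Fin 3 → Curve
  /-- the sequence `Δ₀^γ, …, Δ_d^γ` of triangles traversed by a curve `γ ∉ Γ` -/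
  trav : Curve → List Tri
  /-- the sequence `τ_{i_1}, …, τ_{i_d}` of arcs of `Γ` crossed by `γ` -/
  cross : Curve → List Curve
  cross_mem : ∀ γ, ∀ τ ∈ cross γ, τ ∈ Γ
  cross_sum : ∀ γ, γ ∉ Γ → (cross γ).length = ∑ τ ∈ Γ, Int γ τ
  trav_len : ∀ γ, γ ∉ Γ → (trav γ).length = (cross γ).length + 1
  /-- the restriction `γ' = γ|_{[r₁,r_d]}` intersects the initial segment `γ₀` -/
  restrMeetsStart : Curve → Prop
  /-- the restriction `γ'` intersects the final segment `γ_d` -/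
  restrMeetsEnd : Curve → Prop
  /-- the gentle Jacobian algebra `G_Γ` -/
  G : GQ
  G_gentle : G.IsGentle
  /-- vertices of `Q_Γ` are the internal arcs of `Γ` -/
  vtxArc : G.V → Curve
  vtxArc_mem : ∀ i, vtxArc i ∈ Γ
  vtxArc_inj : Function.Injective vtxArc
  /-- the string `w_Γ^γ` associated to a curve `γ ∉ Γ` -/
  strSrc : Curve → G.V
  strW : Curve → List (Letter G)
  str_good : ∀ γ, γ ∉ Γ → G.GoodStr (strSrc γ) (strW γ)
  str_dim : ∀ γ, γ ∉ Γ → ∀ i, dimVec G (strSrc γ) (strW γ) i = Int γ (vtxArc i)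
  str_surj : ∀ s₀ w, G.GoodStr s₀ w → ∃ γ, γ ∉ Γ ∧ strSrc γ = s₀ ∧ strW γ = w
  str_inj : ∀ γ δ, γ ∉ Γ → δ ∉ Γ → strW γ = strW δ → strSrc γ = strSrc δ → γ = δ

end

/-- The string algebra `kQ/⟨αβτ⟩` on the linear quiver `1 → 2 → 3 → 4`. -/
def Q2 : GQ where
  V := Fin 4
  A := Fin 3
  s a := a.castSucc
  t a := a.succ
  rel p := p = [0, 1, 2]
  rel_path := by rintro p rfl; exact ⟨List.isChain_cons_cons.mpr ⟨by decide, List.isChain_cons_cons.mpr ⟨by decide, List.isChain_singleton _⟩⟩, by decide⟩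

/-! Since `αβτ = 0`, the nonzero paths starting at the source of `α` are `e, α, αβ`, so `M(αβ)`
is the indecomposable projective at that vertex: a morphism `M(αβ) → X` is the same as a vector
of `X` there (the image of the basis vector of `M(αβ)` at that vertex), and such vectors lift
along epimorphisms. Hence every epimorphism onto `M(αβ)` splits and `Ext¹(M(αβ), -) = 0`.
On the other hand the admissible pair `(∅, β, τ) × (α, β, ∅)` is two-sided, so (E3) provides
an extension from `αβ` to `βτ`. -/

variable {k : Type} [Field k]

section General

variable {G : GQ} {s₀ : G.V} {w : List (Letter G)}

theorem Repn.appPath_cons (X : Repn G k) (a : G.A) (p : List G.A) (x : X.V (G.s a)) :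
    X.appPath (a :: p) ⟨G.s a, x⟩ = X.appPath p ⟨G.t a, X.f a x⟩ := by
  simp [Repn.appPath]

def RepHom.id (M : Repn G k) : RepHom M M := ⟨fun _ => LinearMap.id, fun _ _ => rfl⟩

theorem IsProjectiveRep.splits {M E : Repn G k} (hM : IsProjectiveRep M) (hE : SatRel E)
    {π : RepHom E M} (hπ : ∀ i, Function.Surjective (π.app i)) : Splits π :=
  hM.2 E M hE hM.1 π hπ (RepHom.id M)

theorem IsProjectiveRep.not_ext1Nonzero {M : Repn G k} (hM : IsProjectiveRep M)
    (N : Repn G k) : ¬ Ext1Nonzero M N := by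
  rintro ⟨E, -, π, hE, ⟨-, hπ, -⟩, hπ_nonsplit⟩
  exact hπ_nonsplit (hM.splits hE hπ)

theorem stringRep_f_apply {a : G.A}
    [Subsingleton {j : Fin (w.length + 1) // G.vtxN s₀ w (j : ℕ) = G.s a}]
    (x : (stringRep k G s₀ w).V (G.s a))
    {p : {j : Fin (w.length + 1) // G.vtxN s₀ w (j : ℕ) = G.s a}}
    {q : {j : Fin (w.length + 1) // G.vtxN s₀ w (j : ℕ) = G.t a}}
    (hpq : G.Link w a p.1 q.1) :
    (stringRep k G s₀ w).f a x q = x p := by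
  change dite _ _ _ = _
  rw [dif_pos ⟨p, hpq⟩]
  exact congrArg x (Subsingleton.elim _ _)

end General

namespace Q2

theorem isStringAlg : Q2.IsStringAlg :=
  ⟨fun _ _ _ _ ha hb _ => Or.inl (Fin.castSucc_injective _ (ha.trans hb.symm)),
    fun _ _ _ _ ha hb _ => Or.inl (Fin.succ_injective _ (ha.trans hb.symm)),
    fun _ _ _ hab hac _ _ => Fin.castSucc_injective _ (hab.symm.trans hac),
    fun _ _ _ hab hac _ _ => Fin.succ_injective _ (hab.trans hac.symm)⟩

theorem hasExt_αβ_βτ :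
    Q2.HasExt (0 : Fin 4) [Letter.ar (0 : Fin 3), Letter.ar (1 : Fin 3)]
      (1 : Fin 4) [Letter.ar (1 : Fin 3), Letter.ar (2 : Fin 3)] :=
  Or.inr <| Or.inr ⟨[], [.ar (1 : Fin 3)], [.ar (2 : Fin 3)], [.ar (0 : Fin 3)],
    [.ar (1 : Fin 3)], [],
    ⟨⟨rfl, Or.inl rfl, Or.inr ⟨(2 : Fin 3), rfl⟩⟩, ⟨rfl, Or.inr ⟨(0 : Fin 3), rfl⟩, Or.inl rfl⟩,
      Or.inl rfl, by simp⟩,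
    by simp [GQ.OneSided, strInv, Letter.flip]⟩

theorem f_αβτ_eq_zero {X : Repn Q2 k} (hX : SatRel X) (y : X.V (0 : Fin 4)) :
    X.f (2 : Fin 3) (X.f (1 : Fin 3) (X.f (0 : Fin 3) y)) = 0 := by
  have h := hX [(0 : Fin 3), (1 : Fin 3), (2 : Fin 3)] rfl ⟨Q2.s (0 : Fin 3), y⟩
  erw [Repn.appPath_cons, Repn.appPath_cons, Repn.appPath_cons] at h
  exact h

abbrev αβ : List (Letter Q2) := [Letter.ar (0 : Fin 3), Letter.ar (1 : Fin 3)]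

abbrev αβPos (i : Q2.V) : Type := {j : Fin (αβ.length + 1) // Q2.vtxN (0 : Fin 4) αβ j = i}

theorem vtxN_αβ (j : Fin 3) : Q2.vtxN (0 : Fin 4) αβ j = j.castSucc := by
  fin_cases j <;> rfl

def αβPos.ofFin (j : Fin 3) : αβPos j.castSucc := ⟨j, vtxN_αβ j⟩

instance (i : Q2.V) : Subsingleton (αβPos i) :=
  ⟨fun ⟨j, hj⟩ ⟨j', hj'⟩ => Subtype.ext <| Fin.castSucc_injective _ <|
    (vtxN_αβ j).symm.trans (hj.trans (hj'.symm.trans (vtxN_αβ j')))⟩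

instance : IsEmpty (αβPos (3 : Fin 4)) :=
  ⟨fun ⟨j, hj⟩ => Fin.castSucc_ne_last j ((vtxN_αβ j).symm.trans hj)⟩

-- `Q2.V` is `Fin 4` only after unfolding `Q2`, which instance search does not do.
instance (X : Repn Q2 k) (i : Fin 4) : AddCommGroup (X.V i) := X.acg i
instance (X : Repn Q2 k) (i : Fin 4) : Module k (X.V i) := X.mod i

variable (k) in
noncomputable abbrev Mαβ : Repn Q2 k := stringRep k Q2 (0 : Fin 4) αβ

def basisVec (i : Q2.V) : (Mαβ k).V i := fun _ => 1

theorem eq_smul_basisVec {i : Q2.V} (q : αβPos i) (x : (Mαβ k).V i) :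
    x = x q • basisVec i := by
  funext p
  rw [Subsingleton.elim p q]
  exact (mul_one _).symm

theorem Mαβ_f_zero_apply (x : (Mαβ k).V (Q2.s (0 : Fin 3))) (q : αβPos (Q2.t (0 : Fin 3))) :
    (Mαβ k).f (0 : Fin 3) x q = x (αβPos.ofFin 0) := by
  rw [Subsingleton.elim q (αβPos.ofFin 1)]
  exact stringRep_f_apply x (Or.inl ⟨0, rfl, rfl, rfl⟩)

theorem Mαβ_f_one_apply (x : (Mαβ k).V (Q2.s (1 : Fin 3))) (q : αβPos (Q2.t (1 : Fin 3))) :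
    (Mαβ k).f (1 : Fin 3) x q = x (αβPos.ofFin 1) := by
  rw [Subsingleton.elim q (αβPos.ofFin 2)]
  exact stringRep_f_apply x (Or.inl ⟨1, rfl, rfl, rfl⟩)

theorem satRel_Mαβ : SatRel (Mαβ k) := by
  rintro p rfl -
  exact Subsingleton.elim (α := αβPos (3 : Fin 4) → k) _ _

noncomputable def fromMαβ {X : Repn Q2 k} (hX : SatRel X) (y : X.V (0 : Fin 4)) :
    RepHom (Mαβ k) X where
  app
    | ⟨0, _⟩ => (LinearMap.proj (αβPos.ofFin 0)).smulRight y
    | ⟨1, _⟩ => (LinearMap.proj (αβPos.ofFin 1)).smulRight (X.f (0 : Fin 3) y)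
    | ⟨2, _⟩ => (LinearMap.proj (αβPos.ofFin 2)).smulRight (X.f (1 : Fin 3) (X.f (0 : Fin 3) y))
    | ⟨3, _⟩ => 0
  comm
    | ⟨0, _⟩, x => by
      change (Mαβ k).f (0 : Fin 3) x _ • _ = X.f (0 : Fin 3) (x _ • y)
      exact congrArg (· • _) (Mαβ_f_zero_apply x _) |>.trans ((X.f _).map_smul _ _).symm
    | ⟨1, _⟩, x => by
      change (Mαβ k).f (1 : Fin 3) x _ • _ = X.f (1 : Fin 3) (x _ • X.f (0 : Fin 3) y)
      exact congrArg (· • _) (Mαβ_f_one_apply x _) |>.trans ((X.f _).map_smul _ _).symm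
    | ⟨2, _⟩, x => by
      change 0 = X.f (2 : Fin 3) (x _ • X.f (1 : Fin 3) (X.f (0 : Fin 3) y))
      exact ((X.f _).map_smul _ _).trans (by rw [f_αβτ_eq_zero hX, smul_zero]) |>.symm

theorem app_fromMαβ {X Y : Repn Q2 k} (hX : SatRel X) (hY : SatRel Y) (e : RepHom X Y)
    (y : X.V (0 : Fin 4)) : ∀ (i : Q2.V) (x : (Mαβ k).V i),
      e.app i ((fromMαβ hX y).app i x) = (fromMαβ hY (e.app _ y)).app i x
  | ⟨0, _⟩, _ => map_smul _ _ _
  | ⟨1, _⟩, _ => (map_smul _ _ _).trans (congrArg _ (e.comm (0 : Fin 3) y))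
  | ⟨2, _⟩, _ =>
    (map_smul _ _ _).trans <| congrArg _ <|
      (e.comm (1 : Fin 3) _).trans (congrArg _ (e.comm (0 : Fin 3) y))
  | ⟨3, _⟩, _ => map_zero _

theorem app_eq_smul_app_basisVec {Y : Repn Q2 k} (g : RepHom (Mαβ k) Y) {i : Q2.V}
    (q : αβPos i) (x : (Mαβ k).V i) : g.app i x = x q • g.app i (basisVec i) := by
  conv_lhs => rw [eq_smul_basisVec q x]
  exact map_smul _ _ _

theorem Mαβ_f_zero_basisVec : (Mαβ k).f (0 : Fin 3) (basisVec _) = basisVec _ :=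
  funext fun _ => Mαβ_f_zero_apply _ _

theorem Mαβ_f_one_basisVec : (Mαβ k).f (1 : Fin 3) (basisVec _) = basisVec _ :=
  funext fun _ => Mαβ_f_one_apply _ _

theorem eq_fromMαβ_app_basisVec {Y : Repn Q2 k} (hY : SatRel Y) (g : RepHom (Mαβ k) Y) :
    ∀ (i : Q2.V) (x : (Mαβ k).V i), g.app i x = (fromMαβ hY (g.app _ (basisVec _))).app i x
  | ⟨0, _⟩, x => app_eq_smul_app_basisVec g (αβPos.ofFin 0) x
  | ⟨1, _⟩, x => (app_eq_smul_app_basisVec g (αβPos.ofFin 1) x).trans <| congrArg _ <|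
      (congrArg (g.app _) Mαβ_f_zero_basisVec.symm).trans (g.comm _ _)
  | ⟨2, _⟩, x => (app_eq_smul_app_basisVec g (αβPos.ofFin 2) x).trans <| congrArg _ <|
      (congrArg (g.app _) Mαβ_f_one_basisVec.symm).trans <| (g.comm _ _).trans <| congrArg _ <|
      (congrArg (g.app _) Mαβ_f_zero_basisVec.symm).trans (g.comm _ _)
  | ⟨3, _⟩, x => by
    obtain rfl : x = 0 := Subsingleton.elim (α := αβPos (3 : Fin 4) → k) _ _
    exact (map_zero _).trans (map_zero _).symm

theorem isProjectiveRep_Mαβ : IsProjectiveRep (Mαβ k) := by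
  refine ⟨satRel_Mαβ, fun X Y hX hY e he g => ?_⟩
  obtain ⟨y, hy⟩ := he _ (g.app _ (basisVec _))
  exact ⟨fromMαβ hX y, fun i x => by rw [app_fromMαβ hX hY, hy, ← eq_fromMαβ_app_basisVec]⟩

end Q2

theorem stmt2_general (k : Type) [Field k] :
    Q2.IsStringAlg ∧
    Q2.HasExt (0 : Fin 4) [Letter.ar (0 : Fin 3), Letter.ar (1 : Fin 3)]
        (1 : Fin 4) [Letter.ar (1 : Fin 3), Letter.ar (2 : Fin 3)] ∧
    IsProjectiveRep (stringRep k Q2 (0 : Fin 4) [Letter.ar (0 : Fin 3), Letter.ar (1 : Fin 3)]) ∧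
    ¬ Ext1Nonzero (stringRep k Q2 (0 : Fin 4) [Letter.ar (0 : Fin 3), Letter.ar (1 : Fin 3)])
        (stringRep k Q2 (1 : Fin 4) [Letter.ar (1 : Fin 3), Letter.ar (2 : Fin 3)]) :=
  ⟨Q2.isStringAlg, Q2.hasExt_αβ_βτ, Q2.isProjectiveRep_Mαβ,
    Q2.isProjectiveRep_Mαβ.not_ext1Nonzero _⟩

/-- **Remark after Corollary 1.** For the string algebra `kQ/⟨αβτ⟩` (which is not gentle),
the strings `w = αβ` and `v = βτ` admit extensions from `w` to `v`, `M(w)` is projective,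
and `Ext¹(M(w), M(v)) = 0`; so Theorem 1 fails for general string algebras. -/
theorem stmt2 (k : Type) [Field k] [IsAlgClosed k] :
    Q2.IsStringAlg ∧
    Q2.HasExt (0 : Fin 4) [Letter.ar (0 : Fin 3), Letter.ar (1 : Fin 3)]
        (1 : Fin 4) [Letter.ar (1 : Fin 3), Letter.ar (2 : Fin 3)] ∧
    IsProjectiveRep (stringRep k Q2 (0 : Fin 4) [Letter.ar (0 : Fin 3), Letter.ar (1 : Fin 3)]) ∧
    ¬ Ext1Nonzero (stringRep k Q2 (0 : Fin 4) [Letter.ar (0 : Fin 3), Letter.ar (1 : Fin 3)])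
        (stringRep k Q2 (1 : Fin 4) [Letter.ar (1 : Fin 3), Letter.ar (2 : Fin 3)]) :=
  stmt2_general k
end

section
/- Let A be a gentle algebra, w a string, and α an arrow such that w does not end on a peak via β, i.e., wβ⁻¹ is a string for some arrow β. Then the hook extension w_h = w β⁻¹ V_β⁻¹ is again a string, where V_β is the inverse string such that N_β = V_β β U_β starts in a deep and ends on a peak; dually, if αw is a string then _h w = V_α α w is a string. -/
open Classical

/-! Gentle algebras have only quadratic relations, so whether a word is a string can be
checked on its subwords of length two. Hence two strings overlapping in a single letter `c`
glue to a string along `c`. The hook extension `w β⁻¹ V_β⁻¹` glues the string `w β⁻¹` to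
`β⁻¹ V_β⁻¹`, a suffix of the string `N_β⁻¹`; dually `V_α α w` glues a prefix of `N_α` to
`α w`. -/

namespace List

theorem IsInfix.infix_concat_or_infix_cons {α : Type*} {q : List α} {c : α} :
    ∀ {X Y : List α}, q <:+: X ++ c :: Y → q.length ≤ 2 → q <:+: X ++ [c] ∨ q <:+: c :: Y
  | [], _, h, _ => Or.inr h
  | x :: X, Y, h, hq => by
    rcases infix_cons_iff.mp h with hpre | hinf
    · have hpre' : x :: (X ++ [c]) <+: x :: (X ++ c :: Y) := by simp
      exact Or.inl (prefix_of_prefix_length_le hpre hpre' (by simp; omega)).isInfix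
    · exact (hinf.infix_concat_or_infix_cons hq).imp_left (·.trans (infix_cons (infix_refl _)))

end List

namespace Letter

variable {G : GQ}

@[simp] lemma flip_flip (l : Letter G) : l.flip.flip = l := by cases l <;> rfl

@[simp] lemma src_flip (l : Letter G) : l.flip.src = l.tgt := by cases l <;> rfl

@[simp] lemma tgt_flip (l : Letter G) : l.flip.tgt = l.src := by cases l <;> rfl

end Letter

section StrInv

variable {G : GQ}

@[simp] lemma strInv_strInv (w : List (Letter G)) : strInv (strInv w) = w := by
  simp [strInv, List.map_reverse, Function.comp_def]

lemma List.IsInfix.strInv {q w : List (Letter G)} (h : q <:+: w) :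
    _root_.strInv q <:+: _root_.strInv w :=
  (h.map _).reverse

lemma strInv_infix_strInv_iff {q w : List (Letter G)} : strInv q <:+: strInv w ↔ q <:+: w :=
  ⟨fun h => by simpa using h.strInv, List.IsInfix.strInv⟩

end StrInv

namespace GQ

variable {G : GQ}

lemma IsStringWord.of_infix {q w : List (Letter G)} (hw : G.IsStringWord w)
    (hq : q <:+: w) : G.IsStringWord q :=
  ⟨hw.1.infix hq, fun p hp =>
    ⟨fun h => (hw.2 p hp).1 (h.trans hq), fun h => (hw.2 p hp).2 (h.trans hq)⟩⟩

lemma IsStringWord.strInv {w : List (Letter G)} (hw : G.IsStringWord w) :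
    G.IsStringWord (strInv w) := by
  refine ⟨?_, fun p hp => ⟨fun h => (hw.2 p hp).2 ?_, fun h => (hw.2 p hp).1 ?_⟩⟩
  · show List.IsChain _ _
    rw [_root_.strInv, List.isChain_reverse, List.isChain_map]
    exact hw.1.imp fun l l' ⟨hfit, hne⟩ =>
      ⟨by simp [hfit], by rw [Letter.flip_flip]; exact fun h => hne h.symm⟩
  · simpa using h.strInv
  · exact strInv_infix_strInv_iff.mp h

lemma IsStringWord.append_cons (hrel : ∀ p, G.rel p → p.length = 2)
    {X Y : List (Letter G)} {c : Letter G}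
    (hX : G.IsStringWord (X ++ [c])) (hY : G.IsStringWord (c :: Y)) :
    G.IsStringWord (X ++ c :: Y) := by
  refine ⟨?_, fun p hp => ?_⟩
  · show List.IsChain _ _
    simpa using hX.1.append_overlap (l₃ := Y) hY.1 (List.cons_ne_nil c [])
  have hlen : p.length = 2 := hrel p hp
  exact ⟨fun h => (h.infix_concat_or_infix_cons (by simp [hlen])).elim
      (hX.2 p hp).1 (hY.2 p hp).1,
    fun h => (h.infix_concat_or_infix_cons (by simp [_root_.strInv, hlen])).elim
      (hX.2 p hp).2 (hY.2 p hp).2⟩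

end GQ

theorem stmt18_general (G : GQ) (hG : G.IsGentle) (s₀ : G.V) (w : List (Letter G)) :
    (∀ (b : G.A) (Vb Ub : List (Letter G)), G.t b = G.endVtx s₀ w →
        G.IsStringWord (w ++ [Letter.inv b]) → G.NCond b Vb Ub →
        G.IsStringWord (w ++ Letter.inv b :: strInv Vb)) ∧
    (∀ (a : G.A) (Va Ua : List (Letter G)), G.t a = s₀ →
        G.IsStringWord (Letter.ar a :: w) → G.NCond a Va Ua →
        G.IsStringWord (Va ++ Letter.ar a :: w)) := by
  have hrel := hG.2.1
  refine ⟨fun b Vb Ub _ hwb hN => ?_, fun a Va Ua _ haw hN => ?_⟩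
  · have hNinv : strInv (Vb ++ Letter.ar b :: Ub) = strInv Ub ++ Letter.inv b :: strInv Vb := by
      simp [strInv, Letter.flip]
    have hhook : G.IsStringWord (Letter.inv b :: strInv Vb) :=
      hN.2.2.1.strInv.of_infix (hNinv ▸ (List.suffix_append _ _).isInfix)
    exact hwb.append_cons hrel hhook
  · have hhook : G.IsStringWord (Va ++ [Letter.ar a]) :=
      hN.2.2.1.of_infix ⟨[], Ua, by simp⟩
    exact hhook.append_cons hrel haw

/-- If `w` does not end on a peak, witnessed by an arrow `β` with `wβ⁻¹` a string, then the
hook extension `w_h = w β⁻¹ V_β⁻¹` is again a string; dually if `αw` is a string then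
`_h w = V_α α w` is a string. -/
theorem stmt18 (G : GQ) (hG : G.IsGentle) (s₀ : G.V) (w : List (Letter G))
    (hw : G.GoodStr s₀ w) :
    (∀ (b : G.A) (Vb Ub : List (Letter G)), G.t b = G.endVtx s₀ w →
        G.IsStringWord (w ++ [Letter.inv b]) → G.NCond b Vb Ub →
        G.IsStringWord (w ++ Letter.inv b :: strInv Vb)) ∧
    (∀ (a : G.A) (Va Ua : List (Letter G)), G.t a = s₀ →
        G.IsStringWord (Letter.ar a :: w) → G.NCond a Va Ua →
        G.IsStringWord (Va ++ Letter.ar a :: w)) :=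
  stmt18_general G hG s₀ w
end
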